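/- arXiv:2308.15569 — 4 statements merged into one kernel-verified Lean document; each statement's English description precedes it below -/
import Mathlib

section
/- Let n ≥ 0 and let σ = (σ_0, …, σ_n) ∈ ℤ^{n+1} satisfy 0 ≤ σ_0 ≤ σ_1 ≤ … ≤ σ_n. Then the following are equivalent: (i) σ_0 ≤ 1 and σ_i ≤ 1 + σ_0 + … + σ_{i−1} for every 1 ≤ i ≤ n; (ii) {⟨c, σ⟩ : c ∈ {±1}^{n+1}} = {j ∈ ℤ : |j| ≤ |σ|_1 and j ≡ |σ|_1 (mod 2)}, where ⟨·,·⟩ is the standard inner product on ℤ^{n+1} and |σ|_1 = σ_0 + … + σ_n. -/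
/-! Common definitions: the E8 lattice, ℤ^m, changemakers, E8-changemakers,
linear lattices Λ(p,q) via Hirzebruch–Jung continued fractions, and
lattice-isomorphism predicates for orthogonal complements. -/

/-- Vectors in `ℤ^m`. -/
abbrev Zvec (m : ℕ) := Fin m → ℤ

/-- The standard inner product on `ℤ^m`. -/
def zdot {m : ℕ} (x y : Zvec m) : ℤ := ∑ i, x i * y i

/-- Coordinates of an element of the E8 lattice with respect to the
basis of simple roots `e_1, …, e_8`. -/
abbrev E8v := Fin 8 → ℤ

/-- The Gram matrix of the simple roots of the (positive definite) E8 lattice. -/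
def E8gram : Matrix (Fin 8) (Fin 8) ℤ :=
  !![2,-1,-1,0,-1,0,0,0;
     -1,2,0,0,0,0,0,0;
     -1,0,2,-1,0,0,0,0;
     0,0,-1,2,0,0,0,0;
     -1,0,0,0,2,-1,0,0;
     0,0,0,0,-1,2,-1,0;
     0,0,0,0,0,-1,2,-1;
     0,0,0,0,0,0,-1,2]

/-- The inner product on the E8 lattice. -/
def e8inner (x y : E8v) : ℤ := ∑ i, ∑ j, x i * E8gram i j * y j

/-- `sStar s i = ⟨s, e_{i+1}⟩`, i.e. `sStar s 0` is `s*_1`, …, `sStar s 7` is `s*_8`. -/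
def sStar (s : E8v) (i : Fin 8) : ℤ := ∑ j, E8gram i j * s j

/-- `s` lies in the fundamental Weyl chamber. -/
def InWeylChamber (s : E8v) : Prop := ∀ i, 0 ≤ sStar s i

/-- The tuple `(s*_1, …, s*_8)` as a function. -/
def starVec (s : E8v) : Fin 8 → ℤ := fun i => sStar s i

/-- A root of E8: a vector of norm 2. -/
def IsRoot (R : E8v) : Prop := e8inner R R = 2

/-- The orthogonal direct sum `E8 ⊕ ℤ^m`. -/
abbrev EZ (m : ℕ) := E8v × Zvec m

/-- The inner product on `E8 ⊕ ℤ^m`. -/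
def pinner {m : ℕ} (x y : EZ m) : ℤ := e8inner x.1 y.1 + zdot x.2 y.2

/-- All coordinates are `±1`. -/
def IsSignVec {m : ℕ} (χ : Zvec m) : Prop := ∀ i, χ i = 1 ∨ χ i = -1

/-- `short(E8 ⊕ ℤ^m)`: the characteristic vectors of minimal norm `m`. -/
def shortSet (m : ℕ) : Set (EZ m) := {c | c.1 = 0 ∧ IsSignVec c.2}

/-- `Short(E8 ⊕ ℤ^m)`: the characteristic vectors of norm `m + 8`. -/
def ShortSet (m : ℕ) : Set (EZ m) :=
  {c | (∃ R : E8v, IsRoot R ∧ c.1 = (2 : ℤ) • R ∧ IsSignVec c.2) ∨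
       (c.1 = 0 ∧ ∃ i, (c.2 i = 3 ∨ c.2 i = -3) ∧
          ∀ j, j ≠ i → (c.2 j = 1 ∨ c.2 j = -1))}

/-- The set of pairings `⟨c, τ⟩` for `c ∈ short`. -/
def shortPairings {m : ℕ} (τ : EZ m) : Set ℤ := {j | ∃ c ∈ shortSet m, pinner c τ = j}

/-- The set of pairings `⟨c, τ⟩` for `c ∈ Short`. -/
def ShortPairings {m : ℕ} (τ : EZ m) : Set ℤ := {j | ∃ c ∈ ShortSet m, pinner c τ = j}

/-- The parity interval `PI(a, b) = {a, a+2, …}∩[a,b]`. -/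
def PI (a b : ℤ) : Set ℤ := {x | a ≤ x ∧ x ≤ b ∧ (x - a) % 2 = 0}

/-- `τ ∈ E8 ⊕ ℤ^m` is an E8-changemaker: with `cm = c(τ)` the maximum of the
short pairings and `CM = C(τ)` the maximum of the Short pairings, the short
pairings form the parity interval `PI(−c(τ), c(τ))` and
`PI(c(τ)+2, C(τ))` is contained in the Short pairings. -/
def IsE8Changemaker {m : ℕ} (τ : EZ m) : Prop :=
  ∃ cm CM : ℤ,
    cm ∈ shortPairings τ ∧ (∀ j ∈ shortPairings τ, j ≤ cm) ∧
    CM ∈ ShortPairings τ ∧ (∀ j ∈ ShortPairings τ, j ≤ CM) ∧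
    shortPairings τ = PI (-cm) cm ∧
    PI (cm + 2) CM ⊆ ShortPairings τ

/-- `|σ|₁` for a vector with nonnegative entries. -/
def onesum {m : ℕ} (σ : Zvec m) : ℤ := ∑ i, σ i

/-- A changemaker vector: `0 ≤ σ_0 ≤ … ≤ σ_{m-1}`, and each entry is at most
one more than the sum of the preceding ones (for the first entry, `σ_0 ≤ 1`). -/
def IsChangemaker {m : ℕ} (σ : Zvec m) : Prop :=
  (∀ i, 0 ≤ σ i) ∧ (∀ i j : Fin m, i ≤ j → σ i ≤ σ j) ∧
  (∀ i : Fin m, σ i ≤ 1 + ∑ j ∈ Finset.univ.filter (fun j => j < i), σ j)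

/-- Numerator/denominator of the Hirzebruch–Jung continued fraction
`[a_1, …, a_k]⁻ = a_1 − 1/(a_2 − 1/(⋯ − 1/a_k))`. -/
def hjPair : List ℤ → ℤ × ℤ
  | [] => (1, 0)
  | a :: rest => ((hjPair rest).1 * a - (hjPair rest).2, (hjPair rest).1)

/-- The Gram matrix of the vertex basis of a linear lattice with diagonal `a`. -/
def linGram {k : ℕ} (a : Fin k → ℤ) : Matrix (Fin k) (Fin k) ℤ :=
  Matrix.of fun i j =>
    if i = j then a i
    else if (i : ℕ) + 1 = (j : ℕ) ∨ (j : ℕ) + 1 = (i : ℕ) then -1 else 0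

/-- `B` is a basis of the orthogonal complement `(τ)^⊥ ⊂ E8 ⊕ ℤ^m`. -/
def IsPerpBasis {m k : ℕ} (τ : EZ m) (B : Fin k → EZ m) : Prop :=
  (∀ i, pinner (B i) τ = 0) ∧
  (∀ x : EZ m, pinner x τ = 0 → ∃ c : Fin k → ℤ, x = ∑ i, c i • B i) ∧
  (∀ c : Fin k → ℤ, (∑ i, c i • B i) = 0 → c = 0)

/-- The Gram matrix of a family of vectors in `E8 ⊕ ℤ^m`. -/
def gramOf {m k : ℕ} (B : Fin k → EZ m) : Matrix (Fin k) (Fin k) ℤ :=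
  Matrix.of fun i j => pinner (B i) (B j)

/-- The orthogonal complement `(τ)^⊥` is isomorphic to the lattice with Gram matrix `M`. -/
def ComplementIsomGram {m k : ℕ} (τ : EZ m) (M : Matrix (Fin k) (Fin k) ℤ) : Prop :=
  ∃ B : Fin k → EZ m, IsPerpBasis τ B ∧ gramOf B = M

/-- `(τ)^⊥` is isomorphic to the linear lattice `Λ(p,q)`. -/
def ComplementIsomLinear {m : ℕ} (τ : EZ m) (p q : ℤ) : Prop :=
  ∃ (k : ℕ) (a : Fin k → ℤ), 0 < k ∧ (∀ i, 2 ≤ a i) ∧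
    hjPair (List.ofFn a) = (p, q) ∧ ComplementIsomGram τ (linGram a)

/-- `M` is the Gram matrix of an orthogonal direct sum of linear lattices:
a tridiagonal matrix with diagonal entries `≥ 2` and off-diagonal entries in `{0, −1}`. -/
def IsSumLinearGram {k : ℕ} (M : Matrix (Fin k) (Fin k) ℤ) : Prop :=
  0 < k ∧ (∀ i, 2 ≤ M i i) ∧
  (∀ i j : Fin k, M i j = M j i) ∧
  (∀ i j : Fin k, (i : ℕ) + 1 = (j : ℕ) → (M i j = 0 ∨ M i j = -1)) ∧
  (∀ i j : Fin k, (i : ℕ) + 1 < (j : ℕ) → M i j = 0)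

/-- `(τ)^⊥` is isomorphic to an orthogonal direct sum of linear lattices. -/
def ComplementSumLinear {m : ℕ} (τ : EZ m) : Prop :=
  ∃ (k : ℕ) (M : Matrix (Fin k) (Fin k) ℤ), IsSumLinearGram M ∧ ComplementIsomGram τ M

section cmAux

variable {n : ℕ}

lemma zdot_eq_sub (c σ : Zvec (n+1)) (hc : IsSignVec c) :
    zdot c σ = (∑ i, σ i) -
      2 * ∑ i ∈ Finset.univ.filter (fun i => c i = -1), σ i := by
  unfold zdot
  rw [Finset.sum_filter, Finset.mul_sum, ← Finset.sum_sub_distrib]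
  refine Finset.sum_congr rfl fun i _ => ?_
  rcases hc i with h | h <;> simp [h] <;> ring

lemma cm_reach (σ : Zvec (n+1)) (hnn : ∀ i, 0 ≤ σ i)
    (hcm : ∀ i : Fin (n+1),
      σ i ≤ 1 + ∑ j ∈ Finset.univ.filter (fun j => j < i), σ j)
    (k : ℤ) (h0 : 0 ≤ k) (h1 : k ≤ ∑ i, σ i) :
    ∃ t : Finset (Fin (n+1)), ∑ i ∈ t, σ i = k := by
  suffices H : ∀ m : ℕ, m ≤ n + 1 → ∀ k : ℤ, 0 ≤ k →
      k ≤ ∑ i ∈ Finset.univ.filter (fun i : Fin (n+1) => (i:ℕ) < m), σ i →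
      ∃ t ⊆ Finset.univ.filter (fun i : Fin (n+1) => (i:ℕ) < m),
        ∑ i ∈ t, σ i = k by
    have huniv : Finset.univ.filter (fun i : Fin (n+1) => (i:ℕ) < n+1)
        = Finset.univ := by
      apply Finset.filter_true_of_mem; intro i _; exact i.isLt
    obtain ⟨t, _, ht⟩ := H (n+1) le_rfl k h0 (by rw [huniv]; exact h1)
    exact ⟨t, ht⟩
  intro m
  induction m with
  | zero =>
    intro _ k hk0 hk1
    have hf : Finset.univ.filter (fun i : Fin (n+1) => (i:ℕ) < 0) = ∅ := by
      apply Finset.filter_false_of_mem; intro i _; omega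
    rw [hf] at hk1; simp at hk1
    refine ⟨∅, by simp, by simp; omega⟩
  | succ m ih =>
    intro hm k hk0 hk1
    have hmn : m < n + 1 := hm
    set i : Fin (n+1) := ⟨m, hmn⟩ with hi
    have hnot : i ∉ Finset.univ.filter (fun j : Fin (n+1) => (j:ℕ) < m) := by
      simp [hi]
    have hfilter : Finset.univ.filter (fun j : Fin (n+1) => (j:ℕ) < m+1)
        = insert i (Finset.univ.filter (fun j : Fin (n+1) => (j:ℕ) < m)) := by
      ext j
      simp only [Finset.mem_filter, Finset.mem_insert, Finset.mem_univ, true_and,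
        Fin.ext_iff, hi]
      omega
    rw [hfilter, Finset.sum_insert hnot] at hk1
    by_cases hcase : k ≤ ∑ j ∈ Finset.univ.filter (fun j : Fin (n+1) => (j:ℕ) < m), σ j
    · obtain ⟨t, hts, ht⟩ := ih (le_of_lt hmn) k hk0 hcase
      exact ⟨t, by rw [hfilter]; exact hts.trans (Finset.subset_insert _ _), ht⟩
    · push_neg at hcase
      have hpref : Finset.univ.filter (fun j : Fin (n+1) => j < i)
          = Finset.univ.filter (fun j : Fin (n+1) => (j:ℕ) < m) := by
        apply Finset.filter_congr; intro j _; simp [Fin.lt_def, hi]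
      have hσi : σ i ≤ 1 + ∑ j ∈ Finset.univ.filter (fun j : Fin (n+1) => (j:ℕ) < m), σ j := by
        have := hcm i; rwa [hpref] at this
      obtain ⟨t, hts, ht⟩ := ih (le_of_lt hmn) (k - σ i) (by omega) (by omega)
      have hit : i ∉ t := fun hmem => hnot (hts hmem)
      refine ⟨insert i t, ?_, ?_⟩
      · rw [hfilter]; exact Finset.insert_subset_insert _ hts
      · rw [Finset.sum_insert hit, ht]; ring

end cmAux

/-- the two defining conditions for a changemaker are equivalent. -/
theorem stmt0 (n : ℕ) (σ : Zvec (n + 1))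
    (hnn : ∀ i, 0 ≤ σ i) (hmono : ∀ i j : Fin (n + 1), i ≤ j → σ i ≤ σ j) :
    (σ 0 ≤ 1 ∧ ∀ i : Fin (n + 1), 1 ≤ (i : ℕ) →
        σ i ≤ 1 + ∑ j ∈ Finset.univ.filter (fun j => j < i), σ j) ↔
      {j : ℤ | ∃ c : Zvec (n + 1), IsSignVec c ∧ zdot c σ = j} =
        {j : ℤ | |j| ≤ onesum σ ∧ (j - onesum σ) % 2 = 0} := by
  set S := onesum σ with hS
  constructor
  · rintro ⟨h0, h1⟩
    -- combined changemaker condition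
    have hcm : ∀ i : Fin (n + 1),
        σ i ≤ 1 + ∑ j ∈ Finset.univ.filter (fun j => j < i), σ j := by
      intro i
      by_cases hi : 1 ≤ (i : ℕ)
      · exact h1 i hi
      · have hi0 : i = 0 := by
          apply Fin.ext; rw [Fin.val_zero]; omega
        have hf : Finset.univ.filter (fun j : Fin (n+1) => j < i) = ∅ := by
          apply Finset.filter_false_of_mem; intro j _
          rw [hi0]; exact Fin.not_lt_zero j
        rw [hf, hi0]
        simpa using h0
    ext j
    simp only [Set.mem_setOf_eq]
    constructor
    · rintro ⟨c, hc, rfl⟩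
      constructor
      · calc |zdot c σ| ≤ ∑ i, |c i * σ i| := Finset.abs_sum_le_sum_abs _ _
          _ = ∑ i, σ i := by
              refine Finset.sum_congr rfl fun i _ => ?_
              rcases hc i with h | h <;>
                simp [h, abs_of_nonneg (hnn i)]
          _ = S := rfl
      · have := zdot_eq_sub c σ hc
        have hSsum : S = ∑ i, σ i := rfl
        omega
    · rintro ⟨hj1, hj2⟩
      have habs := abs_le.mp hj1
      have hdvd : (2:ℤ) ∣ (j - S) := Int.dvd_of_emod_eq_zero hj2
      obtain ⟨k, hk⟩ : ∃ k : ℤ, S - j = 2 * k := by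
        obtain ⟨k, hk⟩ := hdvd; exact ⟨-k, by omega⟩
      obtain ⟨t, ht⟩ := cm_reach σ hnn hcm k (by omega) (by have hSsum : S = ∑ i, σ i := rfl; omega)
      refine ⟨fun i => if i ∈ t then -1 else 1, fun i => ?_, ?_⟩
      · by_cases h : i ∈ t <;> simp [h]
      · have hsv : IsSignVec (fun i => if i ∈ t then (-1:ℤ) else 1) := by
          intro i; by_cases h : i ∈ t <;> simp [h]
        rw [zdot_eq_sub _ σ hsv]
        have hft : Finset.univ.filter
            (fun i => (if i ∈ t then (-1:ℤ) else 1) = -1) = t := by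
          ext i
          by_cases h : i ∈ t <;> simp [h]
        rw [hft, ht]
        have hSsum : S = ∑ i, σ i := rfl
        omega
  · intro h
    have key : ∀ i : Fin (n + 1),
        σ i ≤ 1 + ∑ j ∈ Finset.univ.filter (fun j => j < i), σ j := by
      intro i
      by_contra hlt
      push_neg at hlt
      set P := ∑ j ∈ Finset.univ.filter (fun j => j < i), σ j with hP
      have hP2 : P + 2 ≤ σ i := by omega
      have hσS : σ i ≤ S := by
        rw [hS]
        exact Finset.single_le_sum (fun j _ => hnn j) (Finset.mem_univ i)
      have hPnn : 0 ≤ P := Finset.sum_nonneg (fun j _ => hnn j)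
      have hmem : S - 2 * (σ i - 1) ∈
          {j : ℤ | ∃ c : Zvec (n + 1), IsSignVec c ∧ zdot c σ = j} := by
        rw [h]
        refine ⟨by rw [abs_le]; constructor <;> omega, by omega⟩
      obtain ⟨c, hc, hcd⟩ := hmem
      rw [zdot_eq_sub c σ hc] at hcd
      set t := Finset.univ.filter (fun i => c i = -1) with htdef
      have hts : ∑ j ∈ t, σ j = σ i - 1 := by
        have hSsum : S = ∑ i, σ i := rfl
        omega
      by_cases hcase : ∃ l ∈ t, i ≤ l
      · obtain ⟨l, hl, hil⟩ := hcase
        have h1 : σ l ≤ ∑ j ∈ t, σ j :=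
          Finset.single_le_sum (fun j _ => hnn j) hl
        have h2 : σ i ≤ σ l := hmono i l hil
        omega
      · push_neg at hcase
        have hsub : t ⊆ Finset.univ.filter (fun j => j < i) := by
          intro l hl
          simp only [Finset.mem_filter, Finset.mem_univ, true_and]
          exact hcase l hl
        have h3 : ∑ j ∈ t, σ j ≤ P := by
          rw [hP]
          exact Finset.sum_le_sum_of_subset_of_nonneg hsub
            (fun j _ _ => hnn j)
        omega
    constructor
    · have := key 0
      have hf : Finset.univ.filter (fun j : Fin (n+1) => j < 0) = ∅ := by
        apply Finset.filter_false_of_mem; intro j _; exact Fin.not_lt_zero j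
      rw [hf] at this
      simpa using this
    · exact fun i _ => key i
end

section
/- Let n ≥ 0 and let σ = (σ_0, …, σ_n) ∈ ℤ^{n+1} be a changemaker. Then for every integer j with |σ|_1 + 2 ≤ j ≤ |σ|_1 + 2σ_n and j ≡ |σ|_1 (mod 2), there exists a vector c ∈ ℤ^{n+1} having exactly one coordinate equal to 3 or −3 and all other coordinates equal to 1 or −1, such that ⟨c, σ⟩ = j. -/
/-- Extension of a `Zvec (n+1)` to a function on `ℕ`. -/
def extv {n : ℕ} (σ : Zvec (n + 1)) : ℕ → ℤ := fun i => if h : i < n + 1 then σ ⟨i, h⟩ else 0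

lemma extv_val {n : ℕ} (σ : Zvec (n + 1)) (i : Fin (n + 1)) : extv σ i.val = σ i := by
  simp [extv, i.isLt]

lemma filter_sum_eq {n : ℕ} (σ : Zvec (n + 1)) (i : Fin (n + 1)) :
    ∑ j ∈ Finset.univ.filter (fun j => j < i), σ j
      = ∑ j ∈ Finset.range i.val, extv σ j := by
  rw [Finset.sum_filter]
  have h1 : ∀ jj : Fin (n+1), (if jj < i then σ jj else 0)
      = (fun x : ℕ => if x < i.val then extv σ x else 0) jj.val := by
    intro jj
    simp only [Fin.lt_def, extv_val]
  rw [Finset.sum_congr rfl (fun jj _ => h1 jj),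
      Fin.sum_univ_eq_sum_range (fun x : ℕ => if x < i.val then extv σ x else 0) (n+1),
      ← Finset.sum_filter]
  congr 1
  ext x
  simp only [Finset.mem_filter, Finset.mem_range]
  omega

lemma subset_sum (m : ℕ) (f : ℕ → ℤ) (h0 : ∀ i < m, 0 ≤ f i)
    (h1 : ∀ i < m, f i ≤ 1 + ∑ j ∈ Finset.range i, f j) :
    ∀ t : ℤ, 0 ≤ t → t ≤ ∑ j ∈ Finset.range m, f j →
    ∃ ε : ℕ → ℤ, (∀ i, ε i = 0 ∨ ε i = 1) ∧ ∑ i ∈ Finset.range m, ε i * f i = t := by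
  induction m with
  | zero =>
    intro t ht0 ht1
    refine ⟨fun _ => 0, fun _ => Or.inl rfl, ?_⟩
    simp only [Finset.range_zero, Finset.sum_empty] at ht1 ⊢
    omega
  | succ m ih =>
    intro t ht0 ht1
    rw [Finset.sum_range_succ] at ht1
    by_cases hc : t ≤ ∑ j ∈ Finset.range m, f j
    · obtain ⟨ε, hε, hsum⟩ := ih (fun i hi => h0 i (by omega)) (fun i hi => h1 i (by omega)) t ht0 hc
      refine ⟨fun i => if i = m then 0 else ε i, ?_, ?_⟩
      · intro i; dsimp only; split
        · exact Or.inl rfl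
        · exact hε i
      · beta_reduce
        rw [Finset.sum_range_succ, if_pos rfl,
          Finset.sum_congr rfl (fun i hi => by
            rw [if_neg (by simp at hi; omega)])]
        rw [hsum]; ring
    · push_neg at hc
      have hfm : f m ≤ 1 + ∑ j ∈ Finset.range m, f j := h1 m (by omega)
      obtain ⟨ε, hε, hsum⟩ := ih (fun i hi => h0 i (by omega)) (fun i hi => h1 i (by omega))
        (t - f m) (by omega) (by omega)
      refine ⟨fun i => if i = m then 1 else ε i, ?_, ?_⟩
      · intro i; dsimp only; split
        · exact Or.inr rfl
        · exact hε i
      · beta_reduce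
        rw [Finset.sum_range_succ, if_pos rfl,
          Finset.sum_congr rfl (fun i hi => by
            rw [if_neg (by simp at hi; omega)])]
        rw [hsum]; ring

/-- every value in the parity interval `(|σ|₁ + 2, |σ|₁ + 2σ_n)` is
realized as `⟨c, σ⟩` for a vector `c` with one coordinate `±3` and the rest `±1`. -/
theorem stmt1 (n : ℕ) (σ : Zvec (n + 1)) (hσ : IsChangemaker σ) (j : ℤ)
    (h1 : onesum σ + 2 ≤ j) (h2 : j ≤ onesum σ + 2 * σ (Fin.last n))
    (h3 : (j - onesum σ) % 2 = 0) :
    ∃ c : Zvec (n + 1),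
      (∃ i, (c i = 3 ∨ c i = -3) ∧ ∀ t, t ≠ i → (c t = 1 ∨ c t = -1)) ∧
      zdot c σ = j := by
  obtain ⟨hpos, hmono, hcm⟩ := hσ
  set S := onesum σ with hS
  set f := extv σ with hf
  have hSsum : S = ∑ i ∈ Finset.range (n+1), f i := by
    rw [hS, onesum, ← Fin.sum_univ_eq_sum_range f (n+1)]
    exact Finset.sum_congr rfl (fun i _ => (extv_val σ i).symm)
  have hlastval : f n = σ (Fin.last n) := extv_val σ (Fin.last n)
  have hf0 : ∀ i < n + 1, 0 ≤ f i := by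
    intro i hi
    have := hpos ⟨i, hi⟩
    simpa [hf, extv, hi] using this
  have hf1 : ∀ i < n + 1, f i ≤ 1 + ∑ j ∈ Finset.range i, f j := by
    intro i hi
    have := hcm ⟨i, hi⟩
    rw [filter_sum_eq σ ⟨i, hi⟩] at this
    simpa [hf, extv, hi] using this
  set k : ℤ := (j - S) / 2 with hk
  have h2k : 2 * k = j - S := by omega
  have hk1 : 1 ≤ k := by omega
  have hk2 : k ≤ σ (Fin.last n) := by omega
  have hrange : ∑ i ∈ Finset.range (n+1), f i = ∑ i ∈ Finset.range n, f i + f n :=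
    Finset.sum_range_succ f n
  have hlast_le : σ (Fin.last n) ≤ 1 + ∑ j ∈ Finset.range n, f j := by
    have := hf1 n (by omega)
    rwa [hlastval] at this
  obtain ⟨ε, hε, hεsum⟩ := subset_sum n f (fun i hi => hf0 i (by omega))
    (fun i hi => hf1 i (by omega)) (σ (Fin.last n) - k) (by omega) (by omega)
  refine ⟨fun i => if i = Fin.last n then 3 else 1 - 2 * ε i.val, ⟨Fin.last n, ?_, ?_⟩, ?_⟩
  · simp
  · intro t ht
    simp only [if_neg ht]
    rcases hε t.val with h | h <;> rw [h]
    · left; ring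
    · right; ring
  · rw [zdot, Fin.sum_univ_castSucc]
    have hne : ∀ i : Fin n, (Fin.castSucc i) ≠ Fin.last n := by
      intro i
      exact Fin.ne_of_lt (Fin.castSucc_lt_last i)
    have hterm : ∀ i : Fin n,
        (if Fin.castSucc i = Fin.last n then (3:ℤ) else 1 - 2 * ε (Fin.castSucc i).val)
          * σ (Fin.castSucc i)
        = (fun x : ℕ => (1 - 2 * ε x) * f x) i.val := by
      intro i
      rw [if_neg (hne i)]
      have : σ (Fin.castSucc i) = f i.val := by
        rw [hf, ← extv_val σ (Fin.castSucc i)]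
        rfl
      rw [this]
      rfl
    rw [Finset.sum_congr rfl (fun i _ => hterm i),
        Fin.sum_univ_eq_sum_range (fun x : ℕ => (1 - 2 * ε x) * f x) n]
    have hsplit : ∑ x ∈ Finset.range n, (1 - 2 * ε x) * f x
        = ∑ x ∈ Finset.range n, f x - 2 * ∑ x ∈ Finset.range n, ε x * f x := by
      rw [Finset.mul_sum, ← Finset.sum_sub_distrib]
      exact Finset.sum_congr rfl (fun x _ => by ring)
    rw [hsplit, hεsum, if_pos rfl]
    have : σ (Fin.last n) = f n := hlastval.symm
    omega
end

section
/- Let n ≥ 0, let σ ∈ ℤ^{n+1} be a changemaker, let s ∈ E8 satisfy ⟨s, s⟩ ≥ 4, and set τ = (s, σ) ∈ E8 ⊕ ℤ^{n+1} and p = ⟨τ, τ⟩. Then |⟨c, τ⟩| ≤ p for every characteristic vector c of E8 ⊕ ℤ^{n+1} of norm n + 9 (that is, for every c ∈ Short(E8 ⊕ ℤ^{n+1})). -/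
section Stmt2Aux

set_option maxHeartbeats 1000000 in
private lemma e8exp (x y : E8v) : e8inner x y =
    2*x 0*y 0 - x 0*y 1 - x 0*y 2 - x 0*y 4
    - x 1*y 0 + 2*x 1*y 1
    - x 2*y 0 + 2*x 2*y 2 - x 2*y 3
    - x 3*y 2 + 2*x 3*y 3
    - x 4*y 0 + 2*x 4*y 4 - x 4*y 5
    - x 5*y 4 + 2*x 5*y 5 - x 5*y 6
    - x 6*y 5 + 2*x 6*y 6 - x 6*y 7
    - x 7*y 6 + 2*x 7*y 7 := by
  simp only [e8inner, Fin.sum_univ_eight, show E8gram 0 0 = 2 from by decide, show E8gram 0 1 = -1 from by decide, show E8gram 0 2 = -1 from by decide, show E8gram 0 3 = 0 from by decide, show E8gram 0 4 = -1 from by decide, show E8gram 0 5 = 0 from by decide, show E8gram 0 6 = 0 from by decide, show E8gram 0 7 = 0 from by decide, show E8gram 1 0 = -1 from by decide, show E8gram 1 1 = 2 from by decide, show E8gram 1 2 = 0 from by decide, show E8gram 1 3 = 0 from by decide, show E8gram 1 4 = 0 from by decide, show E8gram 1 5 = 0 from by decide, show E8gram 1 6 = 0 from by decide, show E8gram 1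 7 = 0 from by decide, show E8gram 2 0 = -1 from by decide, show E8gram 2 1 = 0 from by decide, show E8gram 2 2 = 2 from by decide, show E8gram 2 3 = -1 from by decide, show E8gram 2 4 = 0 from by decide, show E8gram 2 5 = 0 from by decide, show E8gram 2 6 = 0 from by decide, show E8gram 2 7 = 0 from by decide, show E8gram 3 0 = 0 from by decide, show E8gram 3 1 = 0 from by decide, show E8gram 3 2 = -1 from by decide, show E8gram 3 3 = 2 from by decide, show E8gram 3 4 = 0 from by decide, show E8gram 3 5 = 0 from by decide, show E8gram 3 6 = 0 from by decide, show E8gram 3 7 = 0 from by decide, show E8gram 4 0 = -1 from by decide, show E8gram 4 1 = 0 from by decide, show E8gram 4 2 = 0 from by decide, show E8gram 4 3 = 0 from by decide, show E8gram 4 4 = 2 from by decide, show E8gram 4 5 = -1 from by decide, show E8gram 4 6 = 0 from by decide, show E8gram 4 7 = 0 from by decide, show E8gram 5 0 = 0 from by decide, show E8gram 5 1 = 0 from by decide, show E8gram 5 2 = 0 from by decide, show E8gram 5 3 = 0 from by decide, show E8gram 5 4 = -1 from by decide, show E8gram 5 5 = 2 from by decide, show E8gram 5 6 = -1 from by decide,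 show E8gram 5 7 = 0 from by decide, show E8gram 6 0 = 0 from by decide, show E8gram 6 1 = 0 from by decide, show E8gram 6 2 = 0 from by decide, show E8gram 6 3 = 0 from by decide, show E8gram 6 4 = 0 from by decide, show E8gram 6 5 = -1 from by decide, show E8gram 6 6 = 2 from by decide, show E8gram 6 7 = -1 from by decide, show E8gram 7 0 = 0 from by decide, show E8gram 7 1 = 0 from by decide, show E8gram 7 2 = 0 from by decide, show E8gram 7 3 = 0 from by decide, show E8gram 7 4 = 0 from by decide, show E8gram 7 5 = 0 from by decide, show E8gram 7 6 = -1 from by decide, show E8gram 7 7 = 2 from by decide]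
  ring

private lemma e8_nonneg (x : E8v) : 0 ≤ e8inner x x := by
  have key : 60 * e8inner x x =
      30*(2*x 0 - x 1 - x 2 - x 4)^2 + 10*(3*x 1 - x 2 - x 4)^2
      + 5*(4*x 2 - 3*x 3 - 2*x 4)^2 + 3*(5*x 3 - 2*x 4)^2
      + 3*(4*x 4 - 5*x 5)^2 + 5*(3*x 5 - 4*x 6)^2
      + 10*(2*x 6 - 3*x 7)^2 + 30*(x 7)^2 := by
    rw [e8exp]; ring
  nlinarith [sq_nonneg (2*x 0 - x 1 - x 2 - x 4), sq_nonneg (3*x 1 - x 2 - x 4),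
    sq_nonneg (4*x 2 - 3*x 3 - 2*x 4), sq_nonneg (5*x 3 - 2*x 4),
    sq_nonneg (4*x 4 - 5*x 5), sq_nonneg (3*x 5 - 4*x 6),
    sq_nonneg (2*x 6 - 3*x 7), sq_nonneg (x 7)]

private lemma e8_cs (R t : E8v) (ht : 0 < e8inner t t) :
    (e8inner R t)^2 ≤ e8inner R R * e8inner t t := by
  set a := e8inner t t with ha
  set b := e8inner R t with hb
  have h := e8_nonneg (fun i => a * R i - b * t i)
  have hexp : e8inner (fun i => a * R i - b * t i) (fun i => a * R i - b * t i)
      = a^2 * e8inner R R - 2*a*b*(e8inner R t) + b^2 * e8inner t t := by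
    rw [e8exp, e8exp, e8exp, e8exp]; ring
  rw [hexp, ← ha, ← hb] at h
  nlinarith [h, ht]

private lemma e8_even (t : E8v) :
    ∃ m : ℤ, e8inner t t = 2 * m :=
  ⟨t 0^2 + t 1^2 + t 2^2 + t 3^2 + t 4^2 + t 5^2 + t 6^2 + t 7^2
    - t 0*t 1 - t 0*t 2 - t 0*t 4 - t 2*t 3 - t 4*t 5 - t 5*t 6 - t 6*t 7,
   by rw [e8exp]; ring⟩

end Stmt2Aux

/-- if `⟨s,s⟩ ≥ 4` then `|⟨c, τ⟩| ≤ ⟨τ,τ⟩` for all `c ∈ Short(E8 ⊕ ℤ^{n+1})`. -/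
theorem stmt2 (n : ℕ) (σ : Zvec (n + 1)) (hσ : IsChangemaker σ)
    (s : E8v) (hs : 4 ≤ e8inner s s) :
    ∀ c ∈ ShortSet (n + 1),
      |pinner c ((s, σ) : EZ (n + 1))| ≤ pinner ((s, σ) : EZ (n + 1)) ((s, σ) : EZ (n + 1)) := by
  obtain ⟨hσ0, -, -⟩ := hσ
  intro c hc
  have hQ : (0:ℤ) ≤ zdot σ σ :=
    Finset.sum_nonneg fun i _ => mul_nonneg (hσ0 i) (hσ0 i)
  have hpin : pinner ((s, σ) : EZ (n + 1)) ((s, σ) : EZ (n + 1))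
      = e8inner s s + zdot σ σ := rfl
  rcases hc with ⟨R, hR, hc1, hχ⟩ | ⟨hc1, i, hi3, hj1⟩
  · -- c = (2R, χ)
    have hcτ : pinner c ((s, σ) : EZ (n + 1)) = 2 * e8inner R s + zdot c.2 σ := by
      have : e8inner c.1 s = 2 * e8inner R s := by
        rw [hc1]
        rw [show ((2:ℤ) • R) = (fun i => 2 * R i) from funext fun i => rfl]
        rw [e8exp, e8exp]; ring
      simpa [pinner] using congrArg (· + zdot c.2 σ) this
    have hz : |zdot c.2 σ| ≤ zdot σ σ := by
      calc |zdot c.2 σ| ≤ ∑ j, |c.2 j * σ j| := Finset.abs_sum_le_sum_abs _ _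
        _ ≤ ∑ j, σ j * σ j := by
            apply Finset.sum_le_sum
            intro j _
            have h1 : σ j = 0 ∨ 1 ≤ σ j := by have := hσ0 j; omega
            rcases hχ j with h | h <;> rcases h1 with h1 | h1 <;>
              simp [h, h1, abs_of_nonneg, hσ0 j] <;> nlinarith [hσ0 j]
        _ = zdot σ σ := rfl
    have hcs : (e8inner R s)^2 ≤ 2 * e8inner s s := by
      have := e8_cs R s (by omega)
      rwa [hR] at this
    obtain ⟨m, hm⟩ := e8_even s
    have hb : 2 * |e8inner R s| ≤ e8inner s s := by
      have htb : |e8inner R s|^2 = (e8inner R s)^2 := sq_abs _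
      have ht0 : 0 ≤ |e8inner R s| := abs_nonneg _
      by_contra hcon
      push_neg at hcon
      have hmt : m + 1 ≤ |e8inner R s| := by omega
      have h2 : (m+1)^2 ≤ |e8inner R s|^2 := pow_le_pow_left₀ (by omega) hmt 2
      nlinarith [sq_nonneg (m-1)]
    calc |pinner c ((s, σ) : EZ (n + 1))| = |2 * e8inner R s + zdot c.2 σ| := by rw [hcτ]
      _ ≤ |2 * e8inner R s| + |zdot c.2 σ| := abs_add_le _ _
      _ ≤ e8inner s s + zdot σ σ := by
          rw [abs_mul, abs_two] at *
          omega
      _ = _ := hpin.symm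
  · -- c = (0, χ') with one ±3 coordinate
    have hcτ : pinner c ((s, σ) : EZ (n + 1)) = zdot c.2 σ := by
      have : e8inner c.1 s = 0 := by rw [hc1, e8exp]; simp
      simpa [pinner] using congrArg (· + zdot c.2 σ) this
    have hz : |zdot c.2 σ| ≤ 4 + zdot σ σ := by
      have step : ∀ j, |c.2 j * σ j| ≤ σ j * σ j + (if j = i then 4 else 0) := by
        intro j
        by_cases hji : j = i
        · subst hji
          have h1 : σ j = 0 ∨ 1 ≤ σ j := by have := hσ0 j; omega
          rcases hi3 with h | h <;> rcases h1 with h1 | h1 <;>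
            simp [h, h1, abs_of_nonneg, hσ0 j, abs_mul] <;> nlinarith [hσ0 j]
        · have h1 : σ j = 0 ∨ 1 ≤ σ j := by have := hσ0 j; omega
          rcases hj1 j hji with h | h <;> rcases h1 with h1 | h1 <;>
            simp [hji, h, h1, abs_of_nonneg, hσ0 j] <;> nlinarith [hσ0 j]
      calc |zdot c.2 σ| ≤ ∑ j, |c.2 j * σ j| := Finset.abs_sum_le_sum_abs _ _
        _ ≤ ∑ j, (σ j * σ j + (if j = i then 4 else 0)) :=
            Finset.sum_le_sum fun j _ => step j
        _ = zdot σ σ + 4 := by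
            rw [Finset.sum_add_distrib, Finset.sum_ite_eq' Finset.univ i (fun _ => (4:ℤ))]
            simp [zdot]
        _ = 4 + zdot σ σ := by ring
    rw [hcτ, hpin]
    omega
end

section
/- Let p > q > 0 be coprime integers and let x, y, z be irreducible vectors in the linear lattice Λ(p,q) with ⟨x,x⟩ ≥ 3, ⟨y,y⟩ ≥ 3, ⟨z,z⟩ = 2, ⟨x,y⟩ = 0, and |⟨x,z⟩| = |⟨y,z⟩| = 1. Writing x = ε(x)[T(x)] and y = ε(y)[T(y)] for intervals T(x), T(y) and signs ε(x), ε(y) ∈ {±1}, one has ε(x)ε(y) = ⟨x,z⟩·⟨y,z⟩. -/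
/-- The inner product on the linear lattice with vertex-basis Gram matrix `linGram a`,
in vertex-basis coordinates. -/
def linInner {k : ℕ} (a : Fin k → ℤ) (x y : Zvec k) : ℤ :=
  ∑ i, ∑ j, x i * linGram a i j * y j

/-- Irreducibility in the linear lattice with diagonal `a`. -/
def LinIrreducible {k : ℕ} (a : Fin k → ℤ) (v : Zvec k) : Prop :=
  ¬ ∃ u w : Zvec k, u ≠ 0 ∧ w ≠ 0 ∧ v = u + w ∧ 0 ≤ linInner a u w

/-- The class `[T]` of the interval `T = {x_{lo+1}, …, x_{hi+1}}` (0-indexed). -/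
def intvVec (k lo hi : ℕ) : Zvec k := fun i => if lo ≤ (i : ℕ) ∧ (i : ℕ) ≤ hi then 1 else 0

section Aux
variable {k : ℕ}

lemma linGram_symm (a : Fin k → ℤ) (i j : Fin k) : linGram a i j = linGram a j i := by
  unfold linGram
  simp only [Matrix.of_apply]
  rcases eq_or_ne i j with h | h
  · subst h; simp
  · rw [if_neg h, if_neg (Ne.symm h)]
    by_cases h2 : (i:ℕ)+1 = j ∨ (j:ℕ)+1 = i
    · rw [if_pos h2, if_pos h2.symm]
    · rw [if_neg h2, if_neg fun h3 => h2 h3.symm]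

lemma linInner_symm (a : Fin k → ℤ) (x y : Zvec k) : linInner a x y = linInner a y x := by
  rw [linInner, linInner, Finset.sum_comm]
  refine Finset.sum_congr rfl fun i _ => Finset.sum_congr rfl fun j _ => ?_
  rw [linGram_symm]; ring

lemma linInner_smul_left (a : Fin k → ℤ) (c : ℤ) (x y : Zvec k) :
    linInner a (c • x) y = c * linInner a x y := by
  rw [linInner, linInner, Finset.mul_sum]
  refine Finset.sum_congr rfl fun i _ => ?_
  rw [Finset.mul_sum]
  refine Finset.sum_congr rfl fun j _ => ?_
  simp only [Pi.smul_apply, smul_eq_mul]; ring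

lemma linInner_smul_right (a : Fin k → ℤ) (c : ℤ) (x y : Zvec k) :
    linInner a x (c • y) = c * linInner a x y := by
  rw [linInner_symm, linInner_smul_left, linInner_symm]

lemma linInner_neg_neg (a : Fin k → ℤ) (x y : Zvec k) :
    linInner a (-x) (-y) = linInner a x y := by
  refine Finset.sum_congr rfl fun i _ => Finset.sum_congr rfl fun j _ => ?_
  simp only [Pi.neg_apply]; ring

lemma linInner_eq_sum_col (a : Fin k → ℤ) (x y : Zvec k) :
    linInner a x y = ∑ i, x i * ∑ j, linGram a i j * y j := by
  refine Finset.sum_congr rfl fun i _ => ?_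
  rw [Finset.mul_sum]
  refine Finset.sum_congr rfl fun j _ => ?_
  ring

end Aux

section Aux2
variable {k : ℕ}

lemma sum_single_nat (t : ℕ) (f : Fin k → ℤ) :
    (∑ j : Fin k, if (j : ℕ) = t then f j else 0) = if h : t < k then f ⟨t, h⟩ else 0 := by
  split
  · next h =>
    rw [Finset.sum_eq_single (⟨t, h⟩ : Fin k)]
    · rw [if_pos rfl]
    · exact fun b _ hb => if_neg (fun e => hb (Fin.ext e))
    · intro hmem; exact absurd (Finset.mem_univ _) hmem
  · next h =>
    exact Finset.sum_eq_zero fun j _ => if_neg (fun e => h (by omega))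

lemma colSum_intv (a : Fin k → ℤ) (c d : ℕ) (hd : d < k) (i : Fin k) :
    (∑ j, linGram a i j * intvVec k c d j)
      = (if c ≤ (i : ℕ) ∧ (i : ℕ) ≤ d then a i else 0)
        - (if c ≤ (i : ℕ) + 1 ∧ (i : ℕ) + 1 ≤ d then 1 else 0)
        - (if c + 1 ≤ (i : ℕ) ∧ (i : ℕ) ≤ d + 1 then 1 else 0) := by
  have hterm : ∀ j : Fin k, linGram a i j * intvVec k c d j =
      (if (j : ℕ) = (i : ℕ) then (if c ≤ (i : ℕ) ∧ (i : ℕ) ≤ d then a i else 0) else 0)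
      + (if (j : ℕ) = (i : ℕ) + 1 then -(if c ≤ (i : ℕ) + 1 ∧ (i : ℕ) + 1 ≤ d then 1 else 0) else 0)
      + (if (j : ℕ) = (i : ℕ) - 1 ∧ 1 ≤ (i : ℕ) then -(if c + 1 ≤ (i : ℕ) ∧ (i : ℕ) ≤ d + 1 then 1 else 0) else 0) := by
    intro j
    unfold linGram intvVec
    simp only [Matrix.of_apply]
    rcases eq_or_ne i j with h | h
    · subst h
      rw [if_pos rfl]
      split_ifs
      all_goals first | ring1 | (exfalso; omega)
    · have hne : ¬((j : ℕ) = (i : ℕ)) := fun e => h (Fin.ext e.symm)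
      rw [if_neg h]
      split_ifs
      all_goals first | ring1 | (exfalso; omega)
  rw [Finset.sum_congr rfl (fun j _ => hterm j), Finset.sum_add_distrib,
    Finset.sum_add_distrib, sum_single_nat, sum_single_nat]
  have h3 : (∑ j : Fin k, if (j : ℕ) = (i : ℕ) - 1 ∧ 1 ≤ (i : ℕ) then
      -(if c + 1 ≤ (i : ℕ) ∧ (i : ℕ) ≤ d + 1 then (1:ℤ) else 0) else 0)
      = -(if c + 1 ≤ (i : ℕ) ∧ (i : ℕ) ≤ d + 1 then (1:ℤ) else 0) := by
    by_cases hi0 : 1 ≤ (i : ℕ)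
    · have e1 : (∑ j : Fin k, if (j : ℕ) = (i : ℕ) - 1 ∧ 1 ≤ (i : ℕ) then
          -(if c + 1 ≤ (i : ℕ) ∧ (i : ℕ) ≤ d + 1 then (1:ℤ) else 0) else 0)
          = ∑ j : Fin k, if (j : ℕ) = (i : ℕ) - 1 then
          -(if c + 1 ≤ (i : ℕ) ∧ (i : ℕ) ≤ d + 1 then (1:ℤ) else 0) else 0 :=
        Finset.sum_congr rfl fun j _ => if_congr (by omega) rfl rfl
      rw [e1, sum_single_nat, dif_pos (show (i : ℕ) - 1 < k by omega)]
    · rw [Finset.sum_eq_zero fun j _ => if_neg (by omega),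
        if_neg (show ¬(c + 1 ≤ (i : ℕ) ∧ (i : ℕ) ≤ d + 1) by omega)]
      ring
  rw [h3, dif_pos i.isLt]
  by_cases hik : (i : ℕ) + 1 < k
  · rw [dif_pos hik]; ring
  · rw [dif_neg hik]
    split_ifs
    all_goals first | ring1 | (exfalso; omega)

end Aux2

section Aux3
variable {k : ℕ}

set_option maxHeartbeats 3200000 in
lemma pairing_formula (a : Fin k → ℤ) (lo hi c d : ℕ)
    (hlh : lo ≤ hi) (hhk : hi < k) (hcd : c ≤ d) (hdk : d < k) :
    linInner a (intvVec k lo hi) (intvVec k c d)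
      = (∑ i : Fin k, if lo ≤ (i:ℕ) ∧ (i:ℕ) ≤ hi ∧ c ≤ (i:ℕ) ∧ (i:ℕ) ≤ d then a i - 2 else 0)
        + (if lo ≤ c ∧ c ≤ hi then 1 else 0) + (if lo ≤ d ∧ d ≤ hi then 1 else 0)
        - (if lo + 1 ≤ c ∧ c ≤ hi + 1 then 1 else 0) - (if lo ≤ d + 1 ∧ d + 1 ≤ hi then 1 else 0) := by
  rw [linInner_eq_sum_col]
  have hterm : ∀ i : Fin k, intvVec k lo hi i * (∑ j, linGram a i j * intvVec k c d j)
      = (if lo ≤ (i:ℕ) ∧ (i:ℕ) ≤ hi ∧ c ≤ (i:ℕ) ∧ (i:ℕ) ≤ d then a i - 2 else 0)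
        + (if (i:ℕ) = c then (if lo ≤ c ∧ c ≤ hi then 1 else 0) else 0)
        + (if (i:ℕ) = d then (if lo ≤ d ∧ d ≤ hi then 1 else 0) else 0)
        - (if (i:ℕ) + 1 = c then (if lo + 1 ≤ c ∧ c ≤ hi + 1 then 1 else 0) else 0)
        - (if (i:ℕ) = d + 1 then (if lo ≤ d + 1 ∧ d + 1 ≤ hi then 1 else 0) else 0) := by
    intro i
    rw [colSum_intv a c d hdk i]
    unfold intvVec
    split_ifs
    all_goals first | ring1 | (exfalso; omega)
  rw [Finset.sum_congr rfl (fun i _ => hterm i)]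
  rw [Finset.sum_sub_distrib, Finset.sum_sub_distrib, Finset.sum_add_distrib,
    Finset.sum_add_distrib, sum_single_nat, sum_single_nat, sum_single_nat]
  have h4 : (∑ i : Fin k, if (i:ℕ) + 1 = c then (if lo + 1 ≤ c ∧ c ≤ hi + 1 then (1:ℤ) else 0) else 0)
      = (if lo + 1 ≤ c ∧ c ≤ hi + 1 then (1:ℤ) else 0) := by
    by_cases hc : 1 ≤ c
    · have e1 : ∀ i : Fin k, ((i:ℕ) + 1 = c) ↔ ((i:ℕ) = c - 1) := by intro i; omega
      rw [Finset.sum_congr rfl (fun i _ => if_congr (e1 i) rfl rfl), sum_single_nat,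
        dif_pos (show c - 1 < k by omega)]
    · rw [Finset.sum_eq_zero (fun i _ => if_neg (by omega)),
        if_neg (show ¬(lo + 1 ≤ c ∧ c ≤ hi + 1) by omega)]
  have h5 : (if _ : d + 1 < k then (if lo ≤ d + 1 ∧ d + 1 ≤ hi then (1:ℤ) else 0) else 0)
      = (if lo ≤ d + 1 ∧ d + 1 ≤ hi then (1:ℤ) else 0) := by
    by_cases hdk1 : d + 1 < k
    · rw [dif_pos hdk1]
    · rw [dif_neg hdk1, if_neg (show ¬(lo ≤ d + 1 ∧ d + 1 ≤ hi) by omega)]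
  rw [h4, h5, dif_pos (show c < k by omega), dif_pos (show d < k by omega)]
  try ring

end Aux3

section Aux4
variable {k : ℕ}

lemma irreducible_neg (a : Fin k → ℤ) (v : Zvec k) (h : LinIrreducible a v) :
    LinIrreducible a (-v) := by
  rintro ⟨u, w, hu, hw, hvw, hpos⟩
  refine h ⟨-u, -w, neg_ne_zero.mpr hu, neg_ne_zero.mpr hw, ?_, ?_⟩
  · rw [← neg_add, ← hvw, neg_neg]
  · rwa [linInner_neg_neg]

lemma split_inner (a : Fin k → ℤ) (z : Zvec k) (t : ℕ) (ht : t + 1 < k) :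
    linInner a (fun i => if (i:ℕ) ≤ t then z i else 0)
      (fun i => if t < (i:ℕ) then z i else 0)
      = -(z ⟨t, by omega⟩ * z ⟨t+1, ht⟩) := by
  have hterm : ∀ i j : Fin k,
      (if (i:ℕ) ≤ t then z i else 0) * linGram a i j * (if t < (j:ℕ) then z j else 0)
        = if ((i:ℕ) = t ∧ (j:ℕ) = t + 1) then -(z i * z j) else 0 := by
    intro i j
    unfold linGram
    simp only [Matrix.of_apply]
    rcases eq_or_ne i j with h | h
    · subst h
      rw [if_pos rfl]
      split_ifs
      all_goals first | ring1 | (exfalso; omega)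
    · have hne : ¬((i:ℕ) = (j:ℕ)) := fun e => h (Fin.ext e)
      rw [if_neg h]
      split_ifs
      all_goals first | ring1 | (exfalso; omega)
  have h2 : ∀ i : Fin k,
      (∑ j : Fin k, if ((i:ℕ) = t ∧ (j:ℕ) = t + 1) then -(z i * z j) else 0)
        = if (i:ℕ) = t then -(z i * z ⟨t+1, ht⟩) else 0 := by
    intro i
    by_cases hi : (i:ℕ) = t
    · rw [if_pos hi]
      have e2 : (∑ j : Fin k, if (i:ℕ) = t ∧ (j:ℕ) = t + 1 then -(z i * z j) else 0)
          = ∑ j : Fin k, if (j:ℕ) = t + 1 then -(z i * z j) else 0 :=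
        Finset.sum_congr rfl (fun j _ => if_congr ⟨fun h => h.2, fun h => ⟨hi, h⟩⟩ rfl rfl)
      rw [e2, sum_single_nat, dif_pos ht]
    · rw [if_neg hi, Finset.sum_eq_zero (fun j _ => if_neg (fun hc => hi hc.1))]
  rw [linInner, Finset.sum_congr rfl (fun i _ => Finset.sum_congr rfl (fun j _ => hterm i j)),
    Finset.sum_congr rfl (fun i _ => h2 i), sum_single_nat, dif_pos (show t < k by omega)]

lemma pos_case (a : Fin k → ℤ) (ha : ∀ i, 2 ≤ a i) (z : Zvec k)
    (hz : LinIrreducible a z) (c d : ℕ) (hcd : c ≤ d) (hdk : d < k)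
    (hin : ∀ i : Fin k, c ≤ (i:ℕ) → (i:ℕ) ≤ d → 1 ≤ z i)
    (hout : ∀ i : Fin k, ¬(c ≤ (i:ℕ) ∧ (i:ℕ) ≤ d) → z i = 0) :
    z = intvVec k c d := by
  by_contra hne
  apply hz
  refine ⟨z - intvVec k c d, intvVec k c d, sub_ne_zero.mpr hne, ?_, by abel, ?_⟩
  · intro h0
    have hc := congrFun h0 ⟨c, by omega⟩
    rw [Pi.zero_apply] at hc
    unfold intvVec at hc
    rw [if_pos (show c ≤ c ∧ c ≤ d from ⟨le_refl c, hcd⟩)] at hc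
    exact one_ne_zero hc
  · rw [linInner_eq_sum_col]
    apply Finset.sum_nonneg
    intro i _
    rw [colSum_intv a c d hdk i, Pi.sub_apply]
    by_cases hi : c ≤ (i:ℕ) ∧ (i:ℕ) ≤ d
    · have h1 : 1 ≤ z i := hin i hi.1 hi.2
      have h2 : 2 ≤ a i := ha i
      have hw : intvVec k c d i = 1 := if_pos hi
      rw [hw, if_pos hi]
      apply mul_nonneg (by linarith)
      split_ifs <;> linarith
    · have hzi := hout i hi
      have hw : intvVec k c d i = 0 := if_neg hi
      rw [hw, hzi, if_neg hi]
      split_ifs <;> norm_num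

lemma classify_irreducible (a : Fin k → ℤ) (ha : ∀ i, 2 ≤ a i) (z : Zvec k)
    (hz : LinIrreducible a z) (hz0 : z ≠ 0) :
    ∃ (ε : ℤ) (c d : ℕ), (ε = 1 ∨ ε = -1) ∧ c ≤ d ∧ d < k ∧
      z = ε • intvVec k c d := by
  classical
  obtain ⟨lo, hi, hlo_ne, hhi_ne, hlohi, hbound⟩ :
      ∃ lo hi : Fin k, z lo ≠ 0 ∧ z hi ≠ 0 ∧ (lo:ℕ) ≤ (hi:ℕ) ∧
        (∀ i : Fin k, z i ≠ 0 → (lo:ℕ) ≤ (i:ℕ) ∧ (i:ℕ) ≤ (hi:ℕ)) := by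
    have hSne : (Finset.univ.filter (fun i => z i ≠ 0)).Nonempty := by
      obtain ⟨i, hi⟩ := Function.ne_iff.mp hz0
      exact ⟨i, Finset.mem_filter.mpr ⟨Finset.mem_univ _, hi⟩⟩
    set S := Finset.univ.filter (fun i => z i ≠ 0) with hS
    refine ⟨S.min' hSne, S.max' hSne,
      (Finset.mem_filter.mp (S.min'_mem hSne)).2,
      (Finset.mem_filter.mp (S.max'_mem hSne)).2,
      S.min'_le _ (S.max'_mem hSne), ?_⟩
    intro i h
    have hm : i ∈ S := Finset.mem_filter.mpr ⟨Finset.mem_univ _, h⟩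
    exact ⟨S.min'_le i hm, S.le_max' i hm⟩
  have hout : ∀ i : Fin k, ¬((lo:ℕ) ≤ (i:ℕ) ∧ (i:ℕ) ≤ (hi:ℕ)) → z i = 0 := by
    intro i h
    by_contra hne
    exact h (hbound i hne)
  have hchain : ∀ (t : ℕ) (h1 : (lo:ℕ) ≤ t) (h2 : t < (hi:ℕ)),
      0 < z ⟨t, by omega⟩ * z ⟨t+1, by omega⟩ := by
    intro t h1 h2
    by_contra hc
    push_neg at hc
    apply hz
    refine ⟨(fun i => if (i:ℕ) ≤ t then z i else 0),
      (fun i => if t < (i:ℕ) then z i else 0), ?_, ?_, ?_, ?_⟩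
    · intro h0
      have := congrFun h0 lo
      rw [if_pos h1, Pi.zero_apply] at this
      exact hlo_ne this
    · intro h0
      have := congrFun h0 hi
      rw [if_pos h2, Pi.zero_apply] at this
      exact hhi_ne this
    · funext i
      by_cases hit : (i:ℕ) ≤ t
      · rw [Pi.add_apply, if_pos hit, if_neg (by omega)]; ring
      · rw [Pi.add_apply, if_neg hit, if_pos (by omega)]; ring
    · rw [split_inner a z t (by omega)]
      linarith
  have hprop : ∀ n : ℕ, (hle : (lo:ℕ) + n ≤ (hi:ℕ)) →
      0 < z lo * z ⟨(lo:ℕ) + n, by omega⟩ := by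
    intro n
    induction n with
    | zero =>
      intro _
      have e : (⟨(lo:ℕ) + 0, by omega⟩ : Fin k) = lo := Fin.ext rfl
      rw [e]
      exact mul_self_pos.mpr hlo_ne
    | succ n ih =>
      intro hle
      have h1 := ih (by omega)
      have h2 := hchain ((lo:ℕ) + n) (by omega) (by omega)
      have e : (⟨(lo:ℕ) + (n+1), by omega⟩ : Fin k) = ⟨((lo:ℕ) + n) + 1, by omega⟩ :=
        Fin.ext rfl
      rw [e]
      nlinarith [sq_nonneg (z ⟨(lo:ℕ) + n, by omega⟩)]
  have hin_all : ∀ i : Fin k, (lo:ℕ) ≤ (i:ℕ) → (i:ℕ) ≤ (hi:ℕ) → 0 < z lo * z i := by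
    intro i h1 h2
    have := hprop ((i:ℕ) - (lo:ℕ)) (by omega)
    have e : (⟨(lo:ℕ) + ((i:ℕ) - (lo:ℕ)), by omega⟩ : Fin k) = i :=
      Fin.ext (show (lo:ℕ) + ((i:ℕ) - (lo:ℕ)) = (i:ℕ) by omega)
    rwa [e] at this
  rcases lt_trichotomy (z lo) 0 with hneg | h0 | hpos
  · have hzneg : ∀ i : Fin k, (lo:ℕ) ≤ (i:ℕ) → (i:ℕ) ≤ (hi:ℕ) → 1 ≤ (-z) i := by
      intro i h1 h2
      have := hin_all i h1 h2
      have hzi : z i < 0 := by nlinarith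
      rw [Pi.neg_apply]
      omega
    have houtneg : ∀ i : Fin k, ¬((lo:ℕ) ≤ (i:ℕ) ∧ (i:ℕ) ≤ (hi:ℕ)) → (-z) i = 0 := by
      intro i h
      rw [Pi.neg_apply, hout i h, neg_zero]
    have hres := pos_case a ha (-z) (irreducible_neg a z hz) (lo:ℕ) (hi:ℕ)
      hlohi hi.isLt hzneg houtneg
    refine ⟨-1, (lo:ℕ), (hi:ℕ), Or.inr rfl, hlohi, hi.isLt, ?_⟩
    rw [neg_one_smul, ← hres, neg_neg]
  · exact absurd h0 hlo_ne
  · have hzin : ∀ i : Fin k, (lo:ℕ) ≤ (i:ℕ) → (i:ℕ) ≤ (hi:ℕ) → 1 ≤ z i := by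
      intro i h1 h2
      have := hin_all i h1 h2
      have hzi : 0 < z i := by nlinarith
      omega
    have hres := pos_case a ha z hz (lo:ℕ) (hi:ℕ) hlohi hi.isLt hzin hout
    exact ⟨1, (lo:ℕ), (hi:ℕ), Or.inl rfl, hlohi, hi.isLt, by rw [one_smul]; exact hres⟩

end Aux4

section Aux5
variable {k : ℕ}

lemma sum2_zero_all (a : Fin k → ℤ) (ha : ∀ i, 2 ≤ a i) (P : Fin k → Prop) [DecidablePred P]
    (h : (∑ i : Fin k, if P i then a i - 2 else 0) = 0) : ∀ i, P i → a i = 2 := by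
  intro i hP
  have hnn : ∀ j ∈ Finset.univ, (0:ℤ) ≤ (if P j then a j - 2 else 0) := by
    intro j _
    split_ifs with h'
    · linarith [ha j]
    · exact le_refl 0
  have h0 := (Finset.sum_eq_zero_iff_of_nonneg hnn).mp h i (Finset.mem_univ i)
  rw [if_pos hP] at h0
  omega

lemma exists_heavy (a : Fin k → ℤ) (ha : ∀ i, 2 ≤ a i) (lo hi : ℕ)
    (hlh : lo ≤ hi) (hhk : hi < k)
    (h3 : 3 ≤ linInner a (intvVec k lo hi) (intvVec k lo hi)) :
    ∃ i : Fin k, (lo ≤ (i:ℕ) ∧ (i:ℕ) ≤ hi) ∧ 3 ≤ a i := by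
  rw [pairing_formula a lo hi lo hi hlh hhk hlh hhk] at h3
  by_contra hno
  push_neg at hno
  have h0 : (∑ i : Fin k, if lo ≤ (i:ℕ) ∧ (i:ℕ) ≤ hi ∧ lo ≤ (i:ℕ) ∧ (i:ℕ) ≤ hi
      then a i - 2 else 0) = 0 :=
    Finset.sum_eq_zero fun i _ => by
      split_ifs with h
      · have h1 := hno i ⟨h.1, h.2.1⟩
        have h2 := ha i
        omega
      · rfl
  rw [h0] at h3
  split_ifs at h3 <;> omega

lemma all_two (a : Fin k → ℤ) (ha : ∀ i, 2 ≤ a i) (c d : ℕ) (hcd : c ≤ d) (hdk : d < k)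
    (h2 : linInner a (intvVec k c d) (intvVec k c d) = 2) :
    ∀ i : Fin k, c ≤ (i:ℕ) → (i:ℕ) ≤ d → a i = 2 := by
  rw [pairing_formula a c d c d hcd hdk hcd hdk] at h2
  have hs : (∑ i : Fin k, if c ≤ (i:ℕ) ∧ (i:ℕ) ≤ d ∧ c ≤ (i:ℕ) ∧ (i:ℕ) ≤ d
      then a i - 2 else 0) = 0 := by
    split_ifs at h2 <;> omega
  intro i h1 h2'
  exact sum2_zero_all a ha _ hs i ⟨h1, h2', h1, h2'⟩

lemma core (a : Fin k → ℤ) (ha : ∀ i, 2 ≤ a i)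
    (u v s e c d : ℕ)
    (huv : u ≤ v) (hvk : v < k) (hse : s ≤ e) (hek : e < k) (hcd : c ≤ d) (hdk : d < k)
    (ha2 : ∀ i : Fin k, c ≤ (i:ℕ) → (i:ℕ) ≤ d → a i = 2)
    (hx3 : ∃ i : Fin k, (u ≤ (i:ℕ) ∧ (i:ℕ) ≤ v) ∧ 3 ≤ a i)
    (hy3 : ∃ i : Fin k, (s ≤ (i:ℕ) ∧ (i:ℕ) ≤ e) ∧ 3 ≤ a i)
    (hR : linInner a (intvVec k u v) (intvVec k s e) = 0)
    (hP : linInner a (intvVec k u v) (intvVec k c d) = 1)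
    (hQ : linInner a (intvVec k s e) (intvVec k c d) = -1) : False := by
  obtain ⟨ix, hix, hix3⟩ := hx3
  obtain ⟨iy, hiy, hiy3⟩ := hy3
  rw [pairing_formula a u v c d huv hvk hcd hdk] at hP
  rw [pairing_formula a s e c d hse hek hcd hdk] at hQ
  rw [pairing_formula a u v s e huv hvk hse hek] at hR
  have hSxz : (∑ i : Fin k, if u ≤ (i:ℕ) ∧ (i:ℕ) ≤ v ∧ c ≤ (i:ℕ) ∧ (i:ℕ) ≤ d
      then a i - 2 else 0) = 0 :=
    Finset.sum_eq_zero fun i _ => by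
      split_ifs with h
      · have := ha2 i h.2.2.1 h.2.2.2; omega
      · rfl
  have hSyz : (∑ i : Fin k, if s ≤ (i:ℕ) ∧ (i:ℕ) ≤ e ∧ c ≤ (i:ℕ) ∧ (i:ℕ) ≤ d
      then a i - 2 else 0) = 0 :=
    Finset.sum_eq_zero fun i _ => by
      split_ifs with h
      · have := ha2 i h.2.2.1 h.2.2.2; omega
      · rfl
  rw [hSxz] at hP
  rw [hSyz] at hQ
  have hTxZ : ¬(c ≤ u ∧ v ≤ d) := by
    rintro ⟨h1, h2⟩
    have := ha2 ix (by omega) (by omega)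
    omega
  have hPcase : (c = u ∧ d < v) ∨ (u < c ∧ d = v) := by
    split_ifs at hP <;> omega
  have hQcase : (c = e + 1) ∨ (s = d + 1) := by
    split_ifs at hQ <;> omega
  rcases hPcase with ⟨hcu, hdv⟩ | ⟨huc, hdv⟩ <;> rcases hQcase with h1 | h1
  · -- c = u, d < v, c = e + 1 : Ty abuts Tx on the left, disjoint
    have hS0 : (∑ i : Fin k, if u ≤ (i:ℕ) ∧ (i:ℕ) ≤ v ∧ s ≤ (i:ℕ) ∧ (i:ℕ) ≤ e
        then a i - 2 else 0) = 0 :=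
      Finset.sum_eq_zero fun i _ => if_neg (by omega)
    rw [hS0] at hR
    split_ifs at hR <;> omega
  · -- c = u, d < v, s = d + 1
    by_cases hev : e ≤ v
    · -- Ty ⊆ Tx
      have hnn : ∀ (j : Fin k), j ∈ Finset.univ → (0:ℤ) ≤ (if u ≤ (j:ℕ) ∧ (j:ℕ) ≤ v ∧ s ≤ (j:ℕ) ∧ (j:ℕ) ≤ e
          then a j - 2 else 0) := by
        intro j _
        split_ifs with h'
        · linarith [ha j]
        · exact le_refl 0
      have h1' := Finset.single_le_sum hnn (Finset.mem_univ iy)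
      rw [if_pos (by omega : u ≤ (iy:ℕ) ∧ (iy:ℕ) ≤ v ∧ s ≤ (iy:ℕ) ∧ (iy:ℕ) ≤ e)] at h1'
      split_ifs at hR <;> omega
    · -- e > v : partial overlap, forces a ≡ 2 on all of Tx
      push_neg at hev
      have hS0 : (∑ i : Fin k, if u ≤ (i:ℕ) ∧ (i:ℕ) ≤ v ∧ s ≤ (i:ℕ) ∧ (i:ℕ) ≤ e
          then a i - 2 else 0) = 0 := by
        split_ifs at hR <;> omega
      have ha02 := sum2_zero_all a ha _ hS0
      rcases le_or_gt (ix:ℕ) d with hc1 | hc1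
      · exact absurd (ha2 ix (by omega) hc1) (by omega)
      · exact absurd (ha02 ix ⟨hix.1, hix.2, by omega, by omega⟩) (by omega)
  · -- u < c, d = v, c = e + 1
    by_cases hsu : u ≤ s
    · -- Ty ⊆ Tx
      have hnn : ∀ (j : Fin k), j ∈ Finset.univ → (0:ℤ) ≤ (if u ≤ (j:ℕ) ∧ (j:ℕ) ≤ v ∧ s ≤ (j:ℕ) ∧ (j:ℕ) ≤ e
          then a j - 2 else 0) := by
        intro j _
        split_ifs with h'
        · linarith [ha j]
        · exact le_refl 0
      have h1' := Finset.single_le_sum hnn (Finset.mem_univ iy)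
      rw [if_pos (by omega : u ≤ (iy:ℕ) ∧ (iy:ℕ) ≤ v ∧ s ≤ (iy:ℕ) ∧ (iy:ℕ) ≤ e)] at h1'
      split_ifs at hR <;> omega
    · push_neg at hsu
      have hS0 : (∑ i : Fin k, if u ≤ (i:ℕ) ∧ (i:ℕ) ≤ v ∧ s ≤ (i:ℕ) ∧ (i:ℕ) ≤ e
          then a i - 2 else 0) = 0 := by
        split_ifs at hR <;> omega
      have ha02 := sum2_zero_all a ha _ hS0
      rcases le_or_gt c (ix:ℕ) with hc1 | hc1
      · exact absurd (ha2 ix hc1 (by omega)) (by omega)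
      · exact absurd (ha02 ix ⟨hix.1, hix.2, by omega, by omega⟩) (by omega)
  · -- u < c, d = v, s = d + 1 : Ty abuts Tx on the right, disjoint
    have hS0 : (∑ i : Fin k, if u ≤ (i:ℕ) ∧ (i:ℕ) ≤ v ∧ s ≤ (i:ℕ) ∧ (i:ℕ) ≤ e
        then a i - 2 else 0) = 0 :=
      Finset.sum_eq_zero fun i _ => if_neg (by omega)
    rw [hS0] at hR
    split_ifs at hR <;> omega

end Aux5


/-- sign coherence for orthogonal heavy irreducibles pairing with a
common norm-2 irreducible: `ε(x)ε(y) = ⟨x,z⟩⟨y,z⟩`. -/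
theorem stmt8 (p q : ℤ) (hq : 0 < q) (hpq : q < p) (hco : Int.gcd p q = 1)
    (k : ℕ) (a : Fin k → ℤ) (ha : ∀ i, 2 ≤ a i) (hhj : hjPair (List.ofFn a) = (p, q))
    (x y z : Zvec k)
    (hx : LinIrreducible a x) (hy : LinIrreducible a y) (hz : LinIrreducible a z)
    (hxx : 3 ≤ linInner a x x) (hyy : 3 ≤ linInner a y y) (hzz : linInner a z z = 2)
    (hxy : linInner a x y = 0)
    (hxz : |linInner a x z| = 1) (hyz : |linInner a y z| = 1)
    (εx εy : ℤ) (lox hix loy hiy : ℕ)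
    (hεx : εx = 1 ∨ εx = -1) (hεy : εy = 1 ∨ εy = -1)
    (hlox : lox ≤ hix) (hhix : hix < k) (hloy : loy ≤ hiy) (hhiy : hiy < k)
    (hxrep : x = εx • intvVec k lox hix) (hyrep : y = εy • intvVec k loy hiy) :
    εx * εy = linInner a x z * linInner a y z := by
  classical
  have hz0 : z ≠ 0 := by
    intro h0
    rw [h0] at hzz
    simp [linInner] at hzz
  obtain ⟨εz, c, d, hεz, hcd, hdk, hzrep⟩ := classify_irreducible a ha z hz hz0
  have hεz2 : εz * εz = 1 := by rcases hεz with h | h <;> rw [h] <;> norm_num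
  have hzz' : linInner a (intvVec k c d) (intvVec k c d) = 2 := by
    rw [hzrep, linInner_smul_left, linInner_smul_right] at hzz
    rcases hεz with h | h <;> rw [h] at hzz <;> linarith
  have ha2 := all_two a ha c d hcd hdk hzz'
  have hx3 : ∃ i : Fin k, (lox ≤ (i:ℕ) ∧ (i:ℕ) ≤ hix) ∧ 3 ≤ a i := by
    apply exists_heavy a ha lox hix hlox hhix
    rw [hxrep, linInner_smul_left, linInner_smul_right] at hxx
    rcases hεx with h | h <;> rw [h] at hxx <;> linarith
  have hy3 : ∃ i : Fin k, (loy ≤ (i:ℕ) ∧ (i:ℕ) ≤ hiy) ∧ 3 ≤ a i := by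
    apply exists_heavy a ha loy hiy hloy hhiy
    rw [hyrep, linInner_smul_left, linInner_smul_right] at hyy
    rcases hεy with h | h <;> rw [h] at hyy <;> linarith
  have hR : linInner a (intvVec k lox hix) (intvVec k loy hiy) = 0 := by
    rw [hxrep, hyrep, linInner_smul_left, linInner_smul_right] at hxy
    rcases hεx with h | h <;> rcases hεy with h' | h' <;> rw [h, h'] at hxy <;> linarith
  have hxz' : linInner a (intvVec k lox hix) (intvVec k c d) = 1 ∨
      linInner a (intvVec k lox hix) (intvVec k c d) = -1 := by
    rw [hxrep, hzrep, linInner_smul_left, linInner_smul_right] at hxz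
    have h1 : |εx * (εz * linInner a (intvVec k lox hix) (intvVec k c d))|
        = |linInner a (intvVec k lox hix) (intvVec k c d)| := by
      rw [abs_mul, abs_mul]
      rcases hεx with h | h <;> rcases hεz with h' | h' <;> rw [h, h'] <;> norm_num
    rw [h1] at hxz
    exact (abs_eq (by norm_num)).mp hxz
  have hyz' : linInner a (intvVec k loy hiy) (intvVec k c d) = 1 ∨
      linInner a (intvVec k loy hiy) (intvVec k c d) = -1 := by
    rw [hyrep, hzrep, linInner_smul_left, linInner_smul_right] at hyz
    have h1 : |εy * (εz * linInner a (intvVec k loy hiy) (intvVec k c d))|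
        = |linInner a (intvVec k loy hiy) (intvVec k c d)| := by
      rw [abs_mul, abs_mul]
      rcases hεy with h | h <;> rcases hεz with h' | h' <;> rw [h, h'] <;> norm_num
    rw [h1] at hyz
    exact (abs_eq (by norm_num)).mp hyz
  have hPQ : (linInner a (intvVec k lox hix) (intvVec k c d))
      * (linInner a (intvVec k loy hiy) (intvVec k c d)) = 1 := by
    rcases hxz' with hP | hP <;> rcases hyz' with hQ | hQ
    · rw [hP, hQ]; norm_num
    · exact (core a ha lox hix loy hiy c d hlox hhix hloy hhiy hcd hdk
        ha2 hx3 hy3 hR hP hQ).elim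
    · exact (core a ha loy hiy lox hix c d hloy hhiy hlox hhix hcd hdk
        ha2 hy3 hx3 (by rw [linInner_symm]; exact hR) hQ hP).elim
    · rw [hP, hQ]; norm_num
  rw [hxrep, hyrep, hzrep, linInner_smul_left, linInner_smul_right,
    linInner_smul_left, linInner_smul_right]
  have hfin : ∀ P Q : ℤ, P * Q = 1 →
      εx * εy = εx * (εz * P) * (εy * (εz * Q)) := by
    intro P Q h
    have e : εx * (εz * P) * (εy * (εz * Q)) = (εx * εy) * ((εz * εz) * (P * Q)) := by ring
    rw [e, hεz2, h]
    ring
  exact hfin _ _ hPQ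
end
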